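/- Let M, N be von Neumann algebras with N a factor. Then the center of the von Neumann tensor product satisfies Z(M ⊗̄ N) = Z(M) ⊗̄ ℂ1. -/

import Mathlib

/-! An operator `z` in the center of `(M ⊗ 1 ∪ 1 ⊗ N)''` commutes with `1 ⊗ N` and with `1 ⊗ N'`,
so each slice `⟨h' ⊗ ·, z (h ⊗ ·)⟩` lies in `N'' ∩ N' = ℂ1`. Hence `z = x ⊗ 1`, with `x` the
compression of `z` by a unit vector of `K`, and `x ∈ M ∩ M'` since `x ↦ x ⊗ 1` is injective and
`x ⊗ 1` commutes with `M' ⊗ 1` and `M ⊗ 1`. -/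

noncomputable section

/-- A spatial realization of the Hilbert space tensor product of `H` and `K` on `L`,
together with the two amplification `*`-homomorphisms `x ↦ x ⊗ 1` and `y ↦ 1 ⊗ y`. -/
structure HilbertTensor (H K L : Type*)
    [NormedAddCommGroup H] [InnerProductSpace ℂ H] [CompleteSpace H]
    [NormedAddCommGroup K] [InnerProductSpace ℂ K] [CompleteSpace K]
    [NormedAddCommGroup L] [InnerProductSpace ℂ L] [CompleteSpace L] where
  tp : H →ₗ[ℂ] K →ₗ[ℂ] L
  inner_tp : ∀ (h h' : H) (k k' : K),
    (inner ℂ (tp h k) (tp h' k') : ℂ) = (inner ℂ h h' : ℂ) * (inner ℂ k k' : ℂ)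
  dense_span : Dense (Submodule.span ℂ {z : L | ∃ h k, z = tp h k} : Set L)
  lAct : (H →L[ℂ] H) →⋆ₐ[ℂ] (L →L[ℂ] L)
  rAct : (K →L[ℂ] K) →⋆ₐ[ℂ] (L →L[ℂ] L)
  lAct_tp : ∀ (x : H →L[ℂ] H) (h : H) (k : K), lAct x (tp h k) = tp (x h) k
  rAct_tp : ∀ (y : K →L[ℂ] K) (h : H) (k : K), rAct y (tp h k) = tp h (y k)

/-- The center of a subset of B(H), as a set: R ∩ R'. -/
def centerSet {E : Type*} [NormedAddCommGroup E] [InnerProductSpace ℂ E] [CompleteSpace E]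
    (R : Set (E →L[ℂ] E)) : Set (E →L[ℂ] E) :=
  R ∩ Set.centralizer R

namespace HilbertTensor

open ContinuousLinearMap
open scoped InnerProductSpace

variable {H K L : Type*}
    [NormedAddCommGroup H] [InnerProductSpace ℂ H] [CompleteSpace H]
    [NormedAddCommGroup K] [InnerProductSpace ℂ K] [CompleteSpace K]
    [NormedAddCommGroup L] [InnerProductSpace ℂ L] [CompleteSpace L]
    (T : HilbertTensor H K L)

lemma norm_tp (h : H) (k : K) : ‖T.tp h k‖ = ‖h‖ * ‖k‖ := by
  have hsq : ‖T.tp h k‖ ^ 2 = (‖h‖ * ‖k‖) ^ 2 := by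
    have := T.inner_tp h h k k
    simp only [inner_self_eq_norm_sq_to_K] at this
    rw [mul_pow]
    exact_mod_cast this
  exact (sq_eq_sq₀ (norm_nonneg _) (by positivity)).mp hsq

def tpCLM : H →L[ℂ] K →L[ℂ] L :=
  T.tp.mkContinuous₂ 1 fun h k => by rw [T.norm_tp, one_mul]

@[simp] lemma tpCLM_apply (h : H) (k : K) : T.tpCLM h k = T.tp h k := rfl

lemma ext_tp {f g : L →L[ℂ] L} (hfg : ∀ h k, f (T.tp h k) = g (T.tp h k)) : f = g := by
  refine ContinuousLinearMap.ext_on T.dense_span ?_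
  rintro _ ⟨h, k, rfl⟩
  exact hfg h k

lemma eq_of_forall_inner_tp {u v : L} (huv : ∀ h k, ⟪T.tp h k, u⟫_ℂ = ⟪T.tp h k, v⟫_ℂ) :
    u = v := by
  refine innerSL_inj.mp (ContinuousLinearMap.ext_on T.dense_span ?_)
  rintro _ ⟨h, k, rfl⟩
  rw [innerSL_apply_apply, innerSL_apply_apply, ← inner_conj_symm, huv, inner_conj_symm]

lemma lAct_commute_rAct (x : H →L[ℂ] H) (y : K →L[ℂ] K) : Commute (T.lAct x) (T.rAct y) := by
  refine T.ext_tp fun h k => ?_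
  simp only [mul_apply_eq_comp, T.lAct_tp, T.rAct_tp]

lemma lAct_injective [Nontrivial K] : Function.Injective T.lAct := by
  intro a b hab
  obtain ⟨k₀, hk₀⟩ := exists_ne (0 : K)
  ext h
  have : T.tp (a h - b h) k₀ = 0 := by
    simpa [map_sub, T.lAct_tp, sub_eq_zero] using DFunLike.congr_fun hab (T.tp h k₀)
  rw [← norm_eq_zero, T.norm_tp, mul_eq_zero, norm_eq_zero, norm_eq_zero, sub_eq_zero] at this
  exact this.resolve_right hk₀

lemma subsingleton_of_subsingleton_right (T : HilbertTensor H K L) [Subsingleton K] :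
    Subsingleton (L →L[ℂ] L) :=
  ⟨fun f g => T.ext_tp fun h k => by rw [Subsingleton.elim k 0, map_zero, map_zero, map_zero]⟩

lemma lAct_mem_centralizer {M : Set (H →L[ℂ] H)} {N : Set (K →L[ℂ] K)} {x : H →L[ℂ] H}
    (hx : x ∈ M.centralizer) : T.lAct x ∈ (T.lAct '' M ∪ T.rAct '' N).centralizer := by
  rintro _ (⟨m, hm, rfl⟩ | ⟨n, -, rfl⟩)
  · rw [← map_mul, ← map_mul, hx m hm]
  · exact (T.lAct_commute_rAct x n).symm

lemma rAct_mem_centralizer {M : Set (H →L[ℂ] H)} {N : Set (K →L[ℂ] K)} {y : K →L[ℂ] K}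
    (hy : y ∈ N.centralizer) : T.rAct y ∈ (T.lAct '' M ∪ T.rAct '' N).centralizer := by
  rintro _ (⟨m, -, rfl⟩ | ⟨n, hn, rfl⟩)
  · exact T.lAct_commute_rAct m y
  · rw [← map_mul, ← map_mul, hy n hn]

def slice (h h' : H) (z : L →L[ℂ] L) : K →L[ℂ] K :=
  adjoint (T.tpCLM h') ∘L z ∘L T.tpCLM h

lemma inner_slice_apply (h h' : H) (z : L →L[ℂ] L) (k k' : K) :
    ⟪k', T.slice h h' z k⟫_ℂ = ⟪T.tp h' k', z (T.tp h k)⟫_ℂ := by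
  simp only [slice, comp_apply, adjoint_inner_right, tpCLM_apply]

lemma rAct_comp_tpCLM (y : K →L[ℂ] K) (h : H) : T.rAct y ∘L T.tpCLM h = T.tpCLM h ∘L y :=
  ext fun k => T.rAct_tp y h k

lemma adjoint_tpCLM_comp_rAct (y : K →L[ℂ] K) (h : H) :
    adjoint (T.tpCLM h) ∘L T.rAct y = y ∘L adjoint (T.tpCLM h) := by
  have := congrArg adjoint (T.rAct_comp_tpCLM (adjoint y) h)
  rwa [adjoint_comp, adjoint_comp, adjoint_adjoint, ← star_eq_adjoint (T.rAct _), ← map_star,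
    star_eq_adjoint, adjoint_adjoint] at this

lemma slice_mem_centralizer {S : Set (K →L[ℂ] K)} {z : L →L[ℂ] L}
    (hz : ∀ y ∈ S, T.rAct y * z = z * T.rAct y) (h h' : H) :
    T.slice h h' z ∈ S.centralizer := fun y hy => by
  calc y * T.slice h h' z = adjoint (T.tpCLM h') ∘L (T.rAct y * z) ∘L T.tpCLM h := by
        rw [mul_def, slice, ← comp_assoc, ← T.adjoint_tpCLM_comp_rAct, mul_def, comp_assoc,
          comp_assoc]
    _ = adjoint (T.tpCLM h') ∘L z ∘L (T.rAct y ∘L T.tpCLM h) := by rw [hz y hy, mul_def, comp_assoc]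
    _ = T.slice h h' z * y := by rw [T.rAct_comp_tpCLM]; rfl

lemma exists_eq_lAct_of_slice_scalar [Nontrivial K] {z : L →L[ℂ] L}
    (hz : ∀ h h', ∃ c : ℂ, T.slice h h' z = c • 1) : ∃ x, z = T.lAct x := by
  obtain ⟨k₀, hk₀⟩ := exists_norm_eq K zero_le_one
  refine ⟨adjoint (T.tpCLM.flip k₀) ∘L z ∘L T.tpCLM.flip k₀,
    T.ext_tp fun h k => T.eq_of_forall_inner_tp fun h' k' => ?_⟩
  obtain ⟨c, hc⟩ := hz h h'
  have hslice (k k' : K) : ⟪T.tp h' k', z (T.tp h k)⟫_ℂ = c * ⟪k', k⟫_ℂ := by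
    rw [← inner_slice_apply, hc, smul_apply, one_apply_eq_self, inner_smul_right]
  rw [T.lAct_tp, T.inner_tp, comp_apply, comp_apply, adjoint_inner_right, flip_apply, flip_apply,
    tpCLM_apply, tpCLM_apply, hslice, hslice, inner_self_eq_norm_sq_to_K, hk₀]
  simp

lemma exists_eq_lAct_of_commute_rAct [Nontrivial K] (N : VonNeumannAlgebra K)
    (hN : ∀ z ∈ N, (∀ x ∈ N, z * x = x * z) → ∃ c : ℂ, z = c • (1 : K →L[ℂ] K))
    {z : L →L[ℂ] L} (hzN : ∀ y ∈ (N : Set (K →L[ℂ] K)), T.rAct y * z = z * T.rAct y)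
    (hzN' : ∀ y ∈ (N : Set (K →L[ℂ] K)).centralizer, T.rAct y * z = z * T.rAct y) :
    ∃ x, z = T.lAct x :=
  T.exists_eq_lAct_of_slice_scalar fun h h' => by
    refine hN _ ?_ fun n hn => (T.slice_mem_centralizer hzN h h' n hn).symm
    rw [← SetLike.mem_coe, ← N.centralizer_centralizer]
    exact T.slice_mem_centralizer hzN' h h'

end HilbertTensor

theorem center_of_tensor_with_factor
    {H K L : Type*}
    [NormedAddCommGroup H] [InnerProductSpace ℂ H] [CompleteSpace H]
    [NormedAddCommGroup K] [InnerProductSpace ℂ K] [CompleteSpace K]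
    [NormedAddCommGroup L] [InnerProductSpace ℂ L] [CompleteSpace L]
    (T : HilbertTensor H K L) (M : VonNeumannAlgebra H) (N : VonNeumannAlgebra K)
    -- N is a factor
    (hNfactor : ∀ z ∈ N, (∀ x ∈ N, z * x = x * z) → ∃ c : ℂ, z = c • (1 : K →L[ℂ] K)) :
    centerSet (Set.centralizer (Set.centralizer
        ((⇑T.lAct '' (M : Set (H →L[ℂ] H))) ∪ (⇑T.rAct '' (N : Set (K →L[ℂ] K)))))) =
      ⇑T.lAct '' centerSet (M : Set (H →L[ℂ] H)) := by
  unfold centerSet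
  rw [Set.centralizer_centralizer_centralizer]
  rcases subsingleton_or_nontrivial K with _ | _
  · have := T.subsingleton_of_subsingleton_right
    ext z
    exact iff_of_true ⟨fun _ _ => Subsingleton.elim _ _, fun _ _ => Subsingleton.elim _ _⟩
      ⟨1, ⟨M.one_mem, Set.one_mem_centralizer⟩, Subsingleton.elim _ _⟩
  ext z
  constructor
  · rintro ⟨hzR'', hzR'⟩
    obtain ⟨x, rfl⟩ := T.exists_eq_lAct_of_commute_rAct N hNfactor
      (fun n hn => hzR' _ (Or.inr ⟨n, hn, rfl⟩)) (fun y hy => hzR'' _ (T.rAct_mem_centralizer hy))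
    refine ⟨x, ⟨?_, fun m hm => T.lAct_injective ?_⟩, rfl⟩
    · rw [← M.centralizer_centralizer]
      refine fun m' hm' => T.lAct_injective ?_
      rw [map_mul, map_mul]
      exact hzR'' _ (T.lAct_mem_centralizer hm')
    · rw [map_mul, map_mul]
      exact hzR' _ (Or.inl ⟨m, hm, rfl⟩)
  · rintro ⟨x, ⟨hxM, hxM'⟩, rfl⟩
    exact ⟨Set.subset_centralizer_centralizer (Or.inl ⟨x, hxM, rfl⟩), T.lAct_mem_centralizer hxM'⟩
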